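/- In a gap-free decision-making mechanism (with perfect information), for any root-to-node decision path v_1,…,v_k, if v_k ∈ win_a(o) and v_k ∉ win_a(ō), then there exist an index i < k and an agent b with v_i ∈ win_b(ō). -/

import Mathlib

inductive Outcome where
  | yes : Outcome
  | no : Outcome
deriving DecidableEq

def Outcome.flip : Outcome → Outcome
  | .yes => .no
  | .no => .yes

/-- A decision-making mechanism (perfect information):
a finite rooted directed tree `(V, E)` with root `root`,
agents `A`, actions `Act`, available-action sets `Δ`,
choice functions `τ`, and a leaf labelling `lab`. -/
structure Mech (V A Act : Type) where
  finV : Fintype V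
  E : V → V → Prop
  root : V
  root_no_parent : ∀ v, ¬ E v root
  unique_parent : ∀ u v w, E u w → E v w → u = v
  reach : ∀ v, Relation.ReflTransGen E root v
  Δ : A → V → Set Act
  Δ_nonempty : ∀ a v, (∃ u, E v u) → (Δ a v).Nonempty
  τ : V → (A → Act) → V
  τ_child : ∀ v δ, (∃ u, E v u) → (∀ b, δ b ∈ Δ b v) → E v (τ v δ)
  lab : V → Outcome

namespace Mech

variable {V A Act : Type}

def IsLeaf (M : Mech V A Act) (v : V) : Prop := ∀ u, ¬ M.E v u

def IsDecision (M : Mech V A Act) (v : V) : Prop := ∃ u, M.E v u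

/-- `Next a d v` : the set of children the process can move to from `v`
when agent `a` chooses action `d`. -/
def Next (M : Mech V A Act) (a : A) (d : Act) (v : V) : Set V :=
  { u | ∃ δ : A → Act, (∀ b, δ b ∈ M.Δ b v) ∧ δ a = d ∧ u = M.τ v δ }

/-- `win_a(o)`: the smallest set containing all leaves labelled `o` and
closed under: if `Next a d v ⊆ win_a(o)` for some available action `d`
at a decision node `v`, then `v ∈ win_a(o)`. -/
inductive Win (M : Mech V A Act) (a : A) (o : Outcome) : V → Prop where
  | leaf (v : V) : M.IsLeaf v → M.lab v = o → Win M a o v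
  | step (v : V) (d : Act) : M.IsDecision v → d ∈ M.Δ a v →
      (∀ u ∈ M.Next a d v, Win M a o u) → Win M a o v

/-- A decision path starting at the root. -/
def RootPath (M : Mech V A Act) (l : List V) : Prop :=
  l.head? = some M.root ∧ l.Chain' M.E

/-- Agent `a` is (counterfactually) responsible at leaf `v`. -/
def Responsible (M : Mech V A Act) (a : A) (v : V) : Prop :=
  ∃ l : List V, M.RootPath l ∧ l.getLast? = some v ∧
    ∃ u ∈ l, M.IsDecision u ∧ M.Win a (M.lab v).flip u

def GapFree (M : Mech V A Act) : Prop :=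
  ∀ v, M.IsLeaf v → ∃ a, M.Responsible a v

def Dictator (M : Mech V A Act) (a : A) (v : V) : Prop :=
  M.Win a Outcome.yes v ∧ M.Win a Outcome.no v

def ElectedDictatorship (M : Mech V A Act) : Prop :=
  ∀ (l : List V) (v : V), M.RootPath l → l.getLast? = some v → M.IsLeaf v →
    ∃ u ∈ l, ∃ a, M.Dictator a u

end Mech

/-- A decision-making mechanism with imperfect information. -/
structure IMech (V A Act : Type) extends Mech V A Act where
  sim : A → V → V → Prop
  sim_equiv : ∀ a, Equivalence (sim a)
  sim_decision : ∀ a u v, sim a u v → ((∃ w, E u w) ↔ (∃ w, E v w))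
  sim_Δ : ∀ a u v, sim a u v → Δ a u = Δ a v

namespace IMech

variable {V A Act : Type}

/-- `Next a d ([v]_a)` : the union of `Next a d u` over all `u ∼_a v`. -/
def NextCl (M : IMech V A Act) (a : A) (d : Act) (v : V) : Set V :=
  { w | ∃ u, M.sim a v u ∧ w ∈ M.toMech.Next a d u }

/-- `ewin_a(o)`. -/
inductive EWin (M : IMech V A Act) (a : A) (o : Outcome) : V → Prop where
  | leaf (v : V) : M.toMech.IsLeaf v → M.lab v = o → EWin M a o v
  | known (v : V) (d : Act) : M.toMech.IsDecision v → d ∈ M.Δ a v →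
      (∀ w ∈ M.NextCl a d v, EWin M a o w) → EWin M a o v
  | blind (v : V) : M.toMech.IsDecision v →
      (∀ d ∈ M.Δ a v, ∀ w ∈ M.toMech.Next a d v, EWin M a o w) → EWin M a o v

/-- `uwin_a(o)`. -/
inductive UWin (M : IMech V A Act) (a : A) (o : Outcome) : V → Prop where
  | leaf (v : V) : M.toMech.IsLeaf v → M.lab v = o → UWin M a o v
  | known (v : V) (d : Act) : M.toMech.IsDecision v → d ∈ M.Δ a v →
      (∀ w ∈ M.NextCl a d v, UWin M a o w) → UWin M a o v

def EpistemicallyResponsible (M : IMech V A Act) (a : A) (v : V) : Prop :=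
  ∃ l : List V, M.toMech.RootPath l ∧ l.getLast? = some v ∧
    ∃ u ∈ l, M.toMech.IsDecision u ∧ M.EWin a (M.lab v).flip u

def EpistemicGapFree (M : IMech V A Act) : Prop :=
  ∀ v, M.toMech.IsLeaf v → ∃ a, M.EpistemicallyResponsible a v

def EpistemicDictator (M : IMech V A Act) (a : A) (v : V) : Prop :=
  M.EWin a Outcome.yes v ∧ M.EWin a Outcome.no v

def ElectedEpistemicDictatorship (M : IMech V A Act) : Prop :=
  ∀ (l : List V) (v : V), M.toMech.RootPath l → l.getLast? = some v →
    M.toMech.IsLeaf v → ∃ u ∈ l, ∃ a, M.EpistemicDictator a u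

def SemiEpistemicDictator (M : IMech V A Act) (a : A) (v : V) : Prop :=
  ∃ o : Outcome, M.EWin a o v ∧ M.toMech.Win a o.flip v

def ElectedSemiEpistemicDictatorship (M : IMech V A Act) : Prop :=
  ∀ (l : List V) (v : V), M.toMech.RootPath l → l.getLast? = some v →
    M.toMech.IsLeaf v → ∃ u ∈ l, ∃ a, M.SemiEpistemicDictator a u

end IMech

/-
If `a` can force `o` at `v_k` but cannot force `ō` there, then `a` can keep the play inside
`win_a(o) \ win_a(ō)` all the way to a leaf `u` labelled `o`. At a node where `a` forces `o`, no
other agent can force `ō` (their two strategies meet in a common child), so no agent at all wins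
`ō` on the part of the path from `v_k` to `u`. Gap-freeness makes some agent responsible at `u`,
i.e. winning `ō` at a node of the root path to `u`; this path is unique in a tree, so that node
lies strictly before `v_k`.
-/

theorem Outcome.flip_ne_self (o : Outcome) : o.flip ≠ o := by
  cases o <;> decide

theorem List.IsChain.tail_eq_of_getLast?_eq {α : Type*} {R : α → α → Prop}
    (hR : ∀ a b c, R a b → R a c → b = c) {z : α} (hz : ∀ b, ¬ R z b) :
    ∀ {x : α} {l₁ l₂ : List α}, (x :: l₁).IsChain R → (x :: l₂).IsChain R →
      (x :: l₁).getLast? = some z → (x :: l₂).getLast? = some z → l₁ = l₂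
  | x, [], [], _, _, _, _ => rfl
  | x, [], y :: _, _, h₂, e₁, _ => by
    obtain rfl : x = z := by simpa using e₁
    exact absurd (isChain_cons_cons.mp h₂).1 (hz y)
  | x, y :: _, [], h₁, _, _, e₂ => by
    obtain rfl : x = z := by simpa using e₂
    exact absurd (isChain_cons_cons.mp h₁).1 (hz y)
  | x, y :: l₁, y' :: l₂, h₁, h₂, e₁, e₂ => by
    rw [isChain_cons_cons] at h₁ h₂
    obtain rfl := hR x y y' h₁.1 h₂.1
    rw [getLast?_cons_cons] at e₁ e₂
    rw [tail_eq_of_getLast?_eq hR hz h₁.2 h₂.2 e₁ e₂]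

namespace Mech

variable {V A Act : Type} (M : Mech V A Act)

theorem exists_mem_next_inter {v : V} (hv : M.IsDecision v) {a b : A} (hab : a ≠ b)
    {d d' : Act} (hd : d ∈ M.Δ a v) (hd' : d' ∈ M.Δ b v) :
    ∃ u, u ∈ M.Next a d v ∧ u ∈ M.Next b d' v := by
  classical
  let δ : A → Act :=
    Function.update (Function.update (fun c => (M.Δ_nonempty c v hv).some) b d') a d
  have hδ : ∀ c, δ c ∈ M.Δ c v := by
    intro c
    simp only [δ, Function.update_apply]
    split_ifs with hca hcb
    · exact hca ▸ hd
    · exact hcb ▸ hd'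
    · exact (M.Δ_nonempty c v hv).some_mem
  exact ⟨M.τ v δ, ⟨δ, hδ, by simp [δ], rfl⟩, ⟨δ, hδ, by simp [δ, hab.symm], rfl⟩⟩

variable {M}

theorem Win.lab_eq {a : A} {o : Outcome} {v : V} (h : M.Win a o v) (hv : M.IsLeaf v) :
    M.lab v = o := by
  cases h with
  | leaf _ _ hlab => exact hlab
  | step _ _ hdec => exact absurd hdec.choose_spec (hv _)

theorem Win.eq_of_win_flip {a b : A} {o : Outcome} {v : V} (ha : M.Win a o v)
    (hb : M.Win b o.flip v) : a = b := by
  induction ha with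
  | leaf v hleaf hlab => exact absurd ((hb.lab_eq hleaf).symm.trans hlab) o.flip_ne_self
  | step v d hdec hd _ ih =>
    cases hb with
    | leaf _ hleaf => exact absurd hdec.choose_spec (hleaf _)
    | step _ d' _ hd' hnext' =>
      by_contra hab
      obtain ⟨u, hu, hu'⟩ := M.exists_mem_next_inter hdec hab hd hd'
      exact hab (ih u hu (hnext' u hu'))

theorem Win.exists_isChain_isLeaf {a : A} {o : Outcome} {v : V} (h : M.Win a o v)
    (hn : ¬ M.Win a o.flip v) :
    ∃ t, (v :: t).IsChain M.E ∧ (∀ x ∈ v :: t, M.Win a o x ∧ ¬ M.Win a o.flip x) ∧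
      M.IsLeaf ((v :: t).getLast (List.cons_ne_nil v t)) := by
  induction h with
  | leaf v hleaf hlab =>
    exact ⟨[], .singleton v, by simpa using ⟨.leaf v hleaf hlab, hn⟩, hleaf⟩
  | step v d hdec hd hnext ih =>
    obtain ⟨u, hu, hun⟩ : ∃ u ∈ M.Next a d v, ¬ M.Win a o.flip u := by
      by_contra! hall
      exact hn (.step v d hdec hd hall)
    obtain ⟨t, hchain, hinv, hleaf⟩ := ih u hu hun
    obtain ⟨δ, hδ, -, rfl⟩ := hu
    refine ⟨_ :: t, List.isChain_cons_cons.mpr ⟨M.τ_child v δ hdec hδ, hchain⟩, ?_, by simpa⟩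
    rintro x (_ | ⟨_, hx⟩)
    · exact ⟨.step v d hdec hd hnext, hn⟩
    · exact hinv x hx

theorem RootPath.eq_of_getLast?_eq {l₁ l₂ : List V} {x : V} (h₁ : M.RootPath l₁)
    (h₂ : M.RootPath l₂) (e₁ : l₁.getLast? = some x) (e₂ : l₂.getLast? = some x) :
    l₁ = l₂ := by
  obtain ⟨r₁, rfl⟩ := List.getLast?_eq_some_iff.mp e₁
  obtain ⟨r₂, rfl⟩ := List.getLast?_eq_some_iff.mp e₂
  have hrev (r : List V) : x :: r.reverse = (r ++ [x]).reverse := by simp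
  have hchain {r : List V} (h : M.RootPath (r ++ [x])) :
      (x :: r.reverse).IsChain (fun u v => M.E v u) :=
    hrev r ▸ List.isChain_reverse.mpr h.2
  have hlast {r : List V} (h : M.RootPath (r ++ [x])) :
      (x :: r.reverse).getLast? = some M.root := by
    rw [hrev, List.getLast?_reverse]
    exact h.1
  have := List.IsChain.tail_eq_of_getLast?_eq (fun a b c hb hc => M.unique_parent b c a hb hc)
    (M.root_no_parent ·) (hchain h₁) (hchain h₂) (hlast h₁) (hlast h₂)
  rw [List.reverse_inj.mp this]

theorem RootPath.append {l t : List V} {x : V} (hl : M.RootPath (l ++ [x]))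
    (ht : (x :: t).IsChain M.E) : M.RootPath (l ++ x :: t) := by
  refine ⟨?_, List.isChain_split.mpr ⟨hl.2, ht⟩⟩
  cases l <;> simpa using hl.1

end Mech

theorem stmt16 {V A Act : Type} (M : Mech V A Act)
    (hgf : M.GapFree) (a : A) (o : Outcome)
    (l : List V) (vk : V) (hl : M.RootPath l) (hlast : l.getLast? = some vk)
    (h1 : M.Win a o vk) (h2 : ¬ M.Win a o.flip vk) :
    ∃ i : ℕ, ∃ hi : i + 1 < l.length, ∃ b : A,
      M.Win b o.flip (l.get ⟨i, Nat.lt_of_succ_lt hi⟩) := by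
  obtain ⟨r, rfl⟩ := List.getLast?_eq_some_iff.mp hlast
  obtain ⟨t, hchain, hinv, hleaf⟩ := h1.exists_isChain_isLeaf h2
  set u := (vk :: t).getLast (List.cons_ne_nil vk t)
  have hpath : M.RootPath (r ++ vk :: t) := hl.append hchain
  have hpath_last : (r ++ vk :: t).getLast? = some u := by
    simp [u, List.getLast?_eq_some_getLast (List.cons_ne_nil vk t)]
  obtain ⟨b, l', hl', hlast', w, hw, -, hwin⟩ := hgf u hleaf
  rw [(hinv u (List.getLast_mem _)).1.lab_eq hleaf] at hwin
  rw [hl'.eq_of_getLast?_eq hpath hlast' hpath_last, List.mem_append] at hw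
  have hwr : w ∈ r := hw.resolve_right fun hwt => by
    obtain ⟨hwo, hwno⟩ := hinv w hwt
    exact hwno ((hwo.eq_of_win_flip hwin) ▸ hwin)
  obtain ⟨i, hi, rfl⟩ := List.getElem_of_mem hwr
  exact ⟨i, by simpa using hi, b, by simpa [List.getElem_append_left hi] using hwin⟩
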